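/- Every Lie subalgebra of so(2) ⊕ so(3) of dimension at least 2 is either {0} ⊕ so(3), or the full algebra so(2) ⊕ so(3), or is of the form ℝ(a, ξ) ⊕ ℝ(0, η) for suitable elements (equivalently: every proper subalgebra of dimension ≥ 2 other than {0} ⊕ so(3) has abelian image structure given by a line in so(2) times a 1-dimensional subalgebra of so(3)). In particular, there is no 2-dimensional subalgebra of so(2) ⊕ so(3) whose projection to so(3) is 2-dimensional, and any 3-dimensional proper subalgebra equals {0} ⊕ so(3). -/

import Mathlib

/-!
Under the hat map `ℝ³ ≅ so(3)` the commutator becomes the cross product. No plane `V ⊆ ℝ³` is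
closed under `×`: for a basis `u, v` of `V`, the vector `u × v ∈ V` is orthogonal to `V`, hence
zero, contradicting independence. So the projection `W` of a subalgebra `S ⊆ ℝ ⊕ so(3)` to
`so(3)` has dimension `0`, `1` or `3`, and `dim S ≤ dim W + 1`. If `dim W = 1` then
`S = ℝ(1, 0) ⊕ ℝ(0, η)`; if `W = so(3)` then, `so(3)` being perfect, `S ⊇ [S, S] = 0 ⊕ so(3)`,
so `S` is `0 ⊕ so(3)` or everything.
-/

open Matrix Module Submodule LieAlgebra.Orthogonal

attribute [local instance] LieRing.ofAssociativeRing

section CommRing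

variable {R : Type*} [CommRing R]

def hat : (Fin 3 → R) →ₗ[R] Matrix (Fin 3) (Fin 3) R where
  toFun v := !![0, -v 2, v 1; v 2, 0, -v 0; -v 1, v 0, 0]
  map_add' u v := by ext i j; fin_cases i <;> fin_cases j <;> simp <;> ring
  map_smul' c v := by ext i j; fin_cases i <;> fin_cases j <;> simp

theorem hat_injective : Function.Injective (hat (R := R)) := by
  intro u v h
  ext i
  fin_cases i
  exacts [congrFun (congrFun h 2) 1, congrFun (congrFun h 0) 2, congrFun (congrFun h 1) 0]

theorem hat_mem_so (v : Fin 3 → R) : hat v ∈ so (Fin 3) R := by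
  rw [mem_so]; ext i j; fin_cases i <;> fin_cases j <;> simp [hat]

theorem hat_mul_sub_mul_hat (u v : Fin 3 → R) :
    hat u * hat v - hat v * hat u = hat (u ⨯₃ v) := by
  ext i j
  fin_cases i <;> fin_cases j <;> simp [hat, cross_apply] <;> ring

variable {S : Submodule R (R × Matrix (Fin 3) (Fin 3) R)}

theorem le_top_prod_so (hskew : ∀ p ∈ S, p.2ᵀ = -p.2) :
    S ≤ (⊤ : Submodule R R).prod (so (Fin 3) R).toSubmodule :=
  fun p hp => ⟨trivial, (mem_so _ _ _).2 (hskew p hp)⟩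

theorem map_snd_le_so (hskew : ∀ p ∈ S, p.2ᵀ = -p.2) :
    S.map (LinearMap.snd R R _) ≤ (so (Fin 3) R).toSubmodule := by
  rintro _ ⟨p, hp, rfl⟩
  exact (le_top_prod_so hskew hp).2

end CommRing

section Product

variable {K M : Type*} [Field K] [AddCommGroup M] [Module K M]

theorem le_span_sup_map_inr_map_snd (S : Submodule K (K × M)) :
    S ≤ K ∙ (1, 0) ⊔ (S.map (LinearMap.snd K K M)).map (LinearMap.inr K K M) := by
  intro p hp
  rw [mem_sup]
  refine ⟨p.1 • (1, 0), mem_span_singleton.2 ⟨p.1, rfl⟩, (0, p.2), ⟨p.2, ⟨p, hp, rfl⟩, rfl⟩,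
    ?_⟩
  ext <;> simp

theorem finrank_span_pair_le (x y : M) : finrank K (span K {x, y}) ≤ 2 := by
  classical
  refine (finrank_span_le_card _).trans ?_
  simpa using Finset.card_le_two

theorem eq_bot_prod_or_eq_top_prod {S : Submodule K (K × M)} {V : Submodule K M}
    (hbot : (⊥ : Submodule K K).prod V ≤ S) (htop : S ≤ (⊤ : Submodule K K).prod V) :
    S = (⊥ : Submodule K K).prod V ∨ S = (⊤ : Submodule K K).prod V := by
  by_cases h : ∃ q ∈ S, q.1 ≠ 0
  · obtain ⟨q, hqS, hq⟩ := h
    refine Or.inr (le_antisymm htop fun p hp => ?_)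
    have hpq : p = (p.1 / q.1) • q + (0, p.2 - (p.1 / q.1) • q.2) := by
      ext <;> simp [hq]
    rw [hpq]
    exact S.add_mem (S.smul_mem _ hqS)
      (hbot ⟨rfl, V.sub_mem hp.2 (V.smul_mem _ (htop hqS).2)⟩)
  · push Not at h
    exact Or.inl (le_antisymm (fun p hp => ⟨h p hp, (htop hp).2⟩) hbot)

variable [FiniteDimensional K M]

theorem finrank_le_finrank_map_snd_add_one (S : Submodule K (K × M)) :
    finrank K S ≤ finrank K (S.map (LinearMap.snd K K M)) + 1 := by
  refine (finrank_mono (le_span_sup_map_inr_map_snd S)).trans ?_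
  refine (finrank_add_le_finrank_add_finrank _ _).trans ?_
  rw [add_comm, ← (equivMapOfInjective _ LinearMap.inr_injective _).finrank_eq]
  gcongr
  simpa using finrank_span_le_card ({(1, 0)} : Set (K × M))

theorem eq_span_pair_of_finrank_map_snd_eq_one {S : Submodule K (K × M)}
    (hS : 2 ≤ finrank K S) (hW : finrank K (S.map (LinearMap.snd K K M)) = 1) :
    ∃ η ∈ S.map (LinearMap.snd K K M), S = span K {(1, 0), (0, η)} := by
  obtain ⟨η, hη, hWη⟩ :=
    (rank_submodule_le_one_iff (S.map (LinearMap.snd K K M))).1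
      (by rw [← finrank_eq_rank, hW, Nat.cast_one])
  have hle : S ≤ span K {(1, 0), (0, η)} := by
    refine (le_span_sup_map_inr_map_snd S).trans ?_
    rw [span_insert]
    gcongr
    calc _ ≤ (K ∙ η).map (LinearMap.inr K K M) := map_mono hWη
      _ = K ∙ (0, η) := by rw [map_span, Set.image_singleton]; rfl
  exact ⟨η, hη, eq_of_le_of_finrank_le hle ((finrank_span_pair_le _ _).trans hS)⟩

end Product

section OrderedField

variable {K : Type*} [Field K] [LinearOrder K] [IsStrictOrderedRing K]

theorem range_hat : LinearMap.range (hat (R := K)) = (so (Fin 3) K).toSubmodule := by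
  refine le_antisymm ?_ fun X hX => ⟨![X 2 1, X 0 2, X 1 0], ?_⟩
  · rintro _ ⟨v, rfl⟩; exact hat_mem_so v
  · have h : ∀ i j, X j i = -X i j := fun i j => by
      simpa using congrFun (congrFun ((mem_so _ _ X).1 hX) i) j
    ext i j
    fin_cases i <;> fin_cases j <;> simp [hat] <;>
      linarith [h 0 0, h 1 1, h 2 2, h 0 1, h 0 2, h 1 2]

theorem finrank_so_three : finrank K (so (Fin 3) K).toSubmodule = 3 := by
  rw [← range_hat, LinearMap.finrank_range_of_inj hat_injective, finrank_fin_fun]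

theorem finrank_ne_two_of_cross_mem {V : Submodule K (Fin 3 → K)}
    (hV : ∀ u ∈ V, ∀ v ∈ V, u ⨯₃ v ∈ V) : finrank K V ≠ 2 := by
  intro h2
  have : Nontrivial V := Module.nontrivial_of_finrank_pos (R := K) (by omega)
  obtain ⟨x, hx⟩ := exists_ne (0 : V)
  obtain ⟨y, hxy⟩ := exists_linearIndependent_pair_of_one_lt_finrank (R := K) (by omega) hx
  have hxy_indep : LinearIndependent K ![(x : Fin 3 → K), y] := by
    rw [LinearIndependent.pair_iff] at hxy ⊢
    exact fun s t hst => hxy s t (Subtype.ext (by simpa using hst))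
  have hspan : span K {(x : Fin 3 → K), (y : Fin 3 → K)} = V := by
    refine eq_of_le_of_finrank_eq (span_le.2 ?_) ?_
    · simp [Set.insert_subset_iff]
    · rw [h2, ← range_cons_cons_empty _ _ ![]]
      simp [finrank_span_eq_card hxy_indep]
  have hcross : (x : Fin 3 → K) ⨯₃ y ∈ span K {(x : Fin 3 → K), (y : Fin 3 → K)} := by
    rw [hspan]; exact hV x x.2 y y.2
  obtain ⟨a, b, hab⟩ := mem_span_pair.1 hcross
  have hself : ((x : Fin 3 → K) ⨯₃ y) ⬝ᵥ ((x : Fin 3 → K) ⨯₃ y) = 0 := by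
    nth_rw 1 [← hab]
    simp [add_dotProduct, smul_dotProduct, dot_self_cross, dot_cross_self]
  exact crossProduct_ne_zero_iff_linearIndependent.2 hxy_indep (dotProduct_self_eq_zero.1 hself)

theorem finrank_ne_two_of_commutator_mem {W : Submodule K (Matrix (Fin 3) (Fin 3) K)}
    (hW : W ≤ (so (Fin 3) K).toSubmodule) (hbr : ∀ X ∈ W, ∀ Y ∈ W, X * Y - Y * X ∈ W) :
    finrank K W ≠ 2 := by
  have hmap : (W.comap hat).map hat = W := by
    rw [map_comap_eq, range_hat, inf_eq_right.2 hW]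
  rw [← hmap, ← (equivMapOfInjective _ hat_injective _).finrank_eq]
  refine finrank_ne_two_of_cross_mem fun u hu v hv => ?_
  rw [mem_comap, ← hat_mul_sub_mul_hat]
  exact hbr _ hu _ hv

theorem so_three_le_of_commutator_mem {T : Submodule K (Matrix (Fin 3) (Fin 3) K)}
    (hT : ∀ X ∈ so (Fin 3) K, ∀ Y ∈ so (Fin 3) K, X * Y - Y * X ∈ T) :
    (so (Fin 3) K).toSubmodule ≤ T := by
  intro X hX
  obtain ⟨v, rfl⟩ : X ∈ LinearMap.range (hat (R := K)) := by rwa [range_hat]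
  have hv : v = ![0, 1, 0] ⨯₃ ![-v 2, 0, v 0] + ![0, 0, 1] ⨯₃ ![v 1, 0, 0] := by
    ext i; fin_cases i <;> simp [cross_apply]
  rw [hv, map_add, ← hat_mul_sub_mul_hat, ← hat_mul_sub_mul_hat]
  exact T.add_mem (hT _ (hat_mem_so _) _ (hat_mem_so _)) (hT _ (hat_mem_so _) _ (hat_mem_so _))

variable {S : Submodule K (K × Matrix (Fin 3) (Fin 3) K)}

theorem finrank_map_snd_ne_two (hskew : ∀ p ∈ S, p.2ᵀ = -p.2)
    (hbr : ∀ p ∈ S, ∀ q ∈ S, ((0 : K), p.2 * q.2 - q.2 * p.2) ∈ S) :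
    finrank K (S.map (LinearMap.snd K K _)) ≠ 2 := by
  refine finrank_ne_two_of_commutator_mem (map_snd_le_so hskew) ?_
  rintro _ ⟨p, hp, rfl⟩ _ ⟨q, hq, rfl⟩
  exact ⟨_, hbr p hp q hq, rfl⟩

theorem bot_prod_so_le_of_finrank_map_snd_eq_three (hskew : ∀ p ∈ S, p.2ᵀ = -p.2)
    (hbr : ∀ p ∈ S, ∀ q ∈ S, ((0 : K), p.2 * q.2 - q.2 * p.2) ∈ S)
    (h3 : finrank K (S.map (LinearMap.snd K K _)) = 3) :
    (⊥ : Submodule K K).prod (so (Fin 3) K).toSubmodule ≤ S := by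
  have hW : S.map (LinearMap.snd K K _) = (so (Fin 3) K).toSubmodule :=
    eq_of_le_of_finrank_eq (map_snd_le_so hskew) (by rw [h3, finrank_so_three])
  have hso : (so (Fin 3) K).toSubmodule ≤ S.comap (LinearMap.inr K K _) := by
    refine so_three_le_of_commutator_mem fun X hX Y hY => ?_
    obtain ⟨p, hp, rfl⟩ : X ∈ S.map (LinearMap.snd K K _) := hW ▸ hX
    obtain ⟨q, hq, rfl⟩ : Y ∈ S.map (LinearMap.snd K K _) := hW ▸ hY
    exact hbr p hp q hq
  rintro ⟨a, X⟩ ⟨rfl, hX⟩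
  exact hso hX

theorem eq_bot_prod_so_or_eq_top_prod_so_or_eq_span_pair (hskew : ∀ p ∈ S, p.2ᵀ = -p.2)
    (hbr : ∀ p ∈ S, ∀ q ∈ S, ((0 : K), p.2 * q.2 - q.2 * p.2) ∈ S)
    (hdim : 2 ≤ finrank K S) :
    S = (⊥ : Submodule K K).prod (so (Fin 3) K).toSubmodule ∨
      S = (⊤ : Submodule K K).prod (so (Fin 3) K).toSubmodule ∨
      ∃ η ∈ so (Fin 3) K, S = span K {(1, 0), (0, η)} := by
  have hle3 : finrank K (S.map (LinearMap.snd K K _)) ≤ 3 :=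
    (finrank_mono (map_snd_le_so hskew)).trans finrank_so_three.le
  have hge1 := finrank_le_finrank_map_snd_add_one S
  have hne2 := finrank_map_snd_ne_two hskew hbr
  obtain h1 | h3 : finrank K (S.map (LinearMap.snd K K _)) = 1 ∨
      finrank K (S.map (LinearMap.snd K K _)) = 3 := by omega
  · obtain ⟨η, hη, hS⟩ := eq_span_pair_of_finrank_map_snd_eq_one hdim h1
    exact Or.inr (Or.inr ⟨η, map_snd_le_so hskew hη, hS⟩)
  · exact (eq_bot_prod_or_eq_top_prod (bot_prod_so_le_of_finrank_map_snd_eq_three hskew hbr h3)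
      (le_top_prod_so hskew)).imp_right Or.inl

end OrderedField

/-- Subalgebras of `so(2) ⊕ so(3)` of dimension at least 2, where `so(2) ⊕ so(3)` is
modelled inside `ℝ × M₃(ℝ)` (elements `(a, X)` with `X` skew-symmetric, bracket
`[(a,X),(b,Y)] = (0, XY - YX)`).  Every such subalgebra is `{0} ⊕ so(3)`, or all of
`so(2) ⊕ so(3)`, or is spanned by two elements `(a, ξ)` and `(0, η)`.  In particular no
2-dimensional subalgebra projects onto a 2-dimensional subspace of `so(3)`, and every
3-dimensional proper subalgebra is `{0} ⊕ so(3)`. -/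
theorem subalgebras_of_so2_oplus_so3 :
    (∀ S : Submodule ℝ (ℝ × Matrix (Fin 3) (Fin 3) ℝ),
      (∀ p ∈ S, p.2ᵀ = -p.2) →
      (∀ p ∈ S, ∀ q ∈ S, ((0 : ℝ), p.2 * q.2 - q.2 * p.2) ∈ S) →
      2 ≤ Module.finrank ℝ S →
      ((∀ p : ℝ × Matrix (Fin 3) (Fin 3) ℝ, p ∈ S ↔ p.1 = 0 ∧ p.2ᵀ = -p.2) ∨
       (∀ p : ℝ × Matrix (Fin 3) (Fin 3) ℝ, p ∈ S ↔ p.2ᵀ = -p.2) ∨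
       (∃ (a : ℝ) (ξ η : Matrix (Fin 3) (Fin 3) ℝ), ξᵀ = -ξ ∧ ηᵀ = -η ∧
          S = Submodule.span ℝ {(a, ξ), ((0 : ℝ), η)}))) ∧
    (∀ S : Submodule ℝ (ℝ × Matrix (Fin 3) (Fin 3) ℝ),
      (∀ p ∈ S, p.2ᵀ = -p.2) →
      (∀ p ∈ S, ∀ q ∈ S, ((0 : ℝ), p.2 * q.2 - q.2 * p.2) ∈ S) →
      Module.finrank ℝ S = 2 →
      Module.finrank ℝ (S.map (LinearMap.snd ℝ ℝ (Matrix (Fin 3) (Fin 3) ℝ))) ≠ 2) ∧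
    (∀ S : Submodule ℝ (ℝ × Matrix (Fin 3) (Fin 3) ℝ),
      (∀ p ∈ S, p.2ᵀ = -p.2) →
      (∀ p ∈ S, ∀ q ∈ S, ((0 : ℝ), p.2 * q.2 - q.2 * p.2) ∈ S) →
      Module.finrank ℝ S = 3 →
      ¬(∀ p : ℝ × Matrix (Fin 3) (Fin 3) ℝ, p ∈ S ↔ p.2ᵀ = -p.2) →
      (∀ p : ℝ × Matrix (Fin 3) (Fin 3) ℝ, p ∈ S ↔ p.1 = 0 ∧ p.2ᵀ = -p.2)) := by
  refine ⟨fun S hskew hbr hdim => ?_, fun S hskew hbr _ => finrank_map_snd_ne_two hskew hbr,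
    fun S hskew hbr h3 hfull => ?_⟩
  · rcases eq_bot_prod_so_or_eq_top_prod_so_or_eq_span_pair hskew hbr hdim
      with rfl | rfl | ⟨η, hη, rfl⟩
    · exact Or.inl fun p => by simp
    · exact Or.inr (Or.inl fun p => by simp)
    · exact Or.inr (Or.inr ⟨1, 0, η, by simp, (mem_so _ _ _).1 hη, rfl⟩)
  · rcases eq_bot_prod_so_or_eq_top_prod_so_or_eq_span_pair hskew hbr (by omega)
      with rfl | rfl | ⟨η, -, rfl⟩
    · simp
    · simp at hfull
    · have := finrank_span_pair_le (K := ℝ) ((1 : ℝ), (0 : Matrix (Fin 3) (Fin 3) ℝ)) (0, η)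
      omega
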